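/- Let L be a principally generated C-lattice that is a lattice domain and let a ∈ L be nonzero. Then a_v = ⋀ { (x : y) | x, y are principal elements of L and a ≤ (x : y) }. -/

import Mathlib

/-- A multiplicative lattice: a complete lattice (bottom `⊥` playing the role of `0`)
which is a commutative monoid whose identity `1` is the top element, and in which
multiplication distributes over arbitrary joins. -/
class MulLattice (L : Type*) extends CompleteLattice L, CommMonoid L where
  one_eq_top : (1 : L) = ⊤
  mul_sSup : ∀ (a : L) (S : Set L), a * sSup S = ⨆ b ∈ S, a * b

namespace MulLattice

variable {L : Type*} [MulLattice L]

/-- The residual `(y : x) = ⋁ {a | a * x ≤ y}`. -/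
def res (y x : L) : L := sSup {a : L | a * x ≤ y}

/-- `x` is meet-principal: `y ⊓ z * x = ((y : x) ⊓ z) * x` for all `y, z`. -/
def IsMeetPrincipal (x : L) : Prop := ∀ y z : L, y ⊓ z * x = (res y x ⊓ z) * x

/-- `x` is join-principal: `y ⊔ (z : x) = ((y * x ⊔ z) : x)` for all `y, z`. -/
def IsJoinPrincipal (x : L) : Prop := ∀ y z : L, y ⊔ res z x = res (y * x ⊔ z) x

/-- `x` is principal if it is both meet-principal and join-principal. -/
def IsPrincipal (x : L) : Prop := IsMeetPrincipal x ∧ IsJoinPrincipal x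

/-- A prime element: a proper element `p` with `x * y ≤ p → x ≤ p ∨ y ≤ p`. -/
def IsPrime (p : L) : Prop := p ≠ 1 ∧ ∀ x y : L, x * y ≤ p → x ≤ p ∨ y ≤ p

/-- A maximal element: an element maximal in `L - {1}`. -/
def IsMaximal (m : L) : Prop := m ≠ 1 ∧ ∀ b : L, m < b → b = 1

end MulLattice

/-- Compactness of an element of a complete lattice, with the meaning Mathlib's
`CompleteLattice.IsCompactElement` had in December 2024. -/
def CompleteLattice.IsCompactElement {α : Type*} [CompleteLattice α] (k : α) :=
  ∀ s : Set α, k ≤ sSup s → ∃ t : Finset α, ↑t ⊆ s ∧ k ≤ t.sup id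

/-- A principally generated C-lattice: a multiplicative lattice in which `1` is compact,
compact elements are closed under multiplication, every element is a join of compact
elements and every element is a join of principal elements. -/
class PGCLattice (L : Type*) extends MulLattice L where
  top_isCompact : CompleteLattice.IsCompactElement (⊤ : L)
  compact_mul : ∀ a b : L, CompleteLattice.IsCompactElement a →
    CompleteLattice.IsCompactElement b → CompleteLattice.IsCompactElement (a * b)
  compactly_generated : ∀ a : L,
    a = sSup {c : L | CompleteLattice.IsCompactElement c ∧ c ≤ a}
  principally_generated : ∀ a : L,
    a = sSup {x : L | MulLattice.IsPrincipal x ∧ x ≤ a}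

namespace MulLattice

variable {L : Type*}

/-- A lattice domain: `0 = ⊥` is a prime element. -/
def IsLatticeDomain (L : Type*) [MulLattice L] : Prop := IsPrime (⊥ : L)

variable [PGCLattice L]

open Classical in
/-- The divisorial (`v`-)closure of `a`: equals `(x : (x : a))` for a nonzero principal
`x ≤ a` when such an `x` exists (in a lattice domain this is independent of the choice
of `x`), and `⊥` otherwise (in particular `vclos ⊥ = ⊥`). -/
noncomputable def vclos (a : L) : L :=
  if h : ∃ x : L, IsPrincipal x ∧ x ≠ ⊥ ∧ x ≤ a then
    res h.choose (res h.choose a)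
  else ⊥

/-- `a` is divisorial if `a = a_v`. -/
def IsDivisorial (a : L) : Prop := vclos a = a

/-- `L` is h-local: every nonzero prime is below a unique maximal element and
every nonzero element is below only finitely many maximal elements. -/
def IsHLocal (L : Type*) [PGCLattice L] : Prop :=
  (∀ r : L, r ≠ ⊥ → IsPrime r → ∃! m : L, IsMaximal m ∧ r ≤ m) ∧
  (∀ b : L, b ≠ ⊥ → {m : L | IsMaximal m ∧ b ≤ m}.Finite)

end MulLattice

open MulLattice

/-!
Fix a nonzero principal `q ≤ a`, so that `a_v = (q : (q : a))`. Writing `(q : a)` as a join of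
principal elements `y` turns `(q : (q : a))` into the meet of the `(q : y)`, each of which is a
residual of principal elements lying above `a`; this gives `a_v ≥ ⋀ (x : y)`.
Conversely, let `a ≤ (x : y)` with `x, y` principal. For `u = (q y : x)` meet-principality of `x`
gives `u x = q y`, and cancelling the nonzero principal elements `y` and `q` (possible because
`0` is prime) yields `u ≤ (q : (x : y))` and `(q : u) ≤ (x : y)`, whence
`a_v ≤ (q : (q : (x : y))) ≤ (q : u) ≤ (x : y)`.
-/

namespace MulLattice

open Quantale

section

variable {L : Type*} [MulLattice L]

instance : IsQuantale L where
  mul_sSup_distrib := MulLattice.mul_sSup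
  sSup_mul_distrib s y := by
    simp only [mul_comm _ y]
    exact MulLattice.mul_sSup y s

lemma le_res_iff {x y z : L} : z ≤ res y x ↔ z * x ≤ y :=
  leftMulResiduation_le_iff_mul_le

lemma res_mul_le (y x : L) : res y x * x ≤ y :=
  le_res_iff.mp le_rfl

lemma res_anti_right {y x x' : L} (h : x ≤ x') : res y x' ≤ res y x :=
  le_res_iff.mpr ((mul_le_mul_right h _).trans (res_mul_le y x'))

lemma res_bot_right (y : L) : res y (⊥ : L) = ⊤ :=
  top_le_iff.mp (le_res_iff.mpr (by rw [mul_bot]; exact bot_le))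

lemma res_sSup_right (y : L) (S : Set L) : res y (sSup S) = ⨅ x ∈ S, res y x := by
  refine le_antisymm (le_iInf₂ fun x hx => res_anti_right (le_sSup hx)) ?_
  rw [le_res_iff, mul_sSup_distrib]
  exact iSup₂_le fun x hx => (mul_le_mul_left (iInf₂_le x hx) x).trans (res_mul_le y x)

lemma IsMeetPrincipal.res_mul_of_le {x b : L} (hx : IsMeetPrincipal x) (h : b ≤ x) :
    res b x * x = b := by
  have := hx b 1
  rwa [one_mul, MulLattice.one_eq_top, inf_top_eq, inf_eq_left.mpr h, eq_comm] at this

lemma res_bot_left (hL : IsLatticeDomain L) {x : L} (hx : x ≠ ⊥) : res (⊥ : L) x = ⊥ :=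
  le_bot_iff.mp ((hL.2 _ x (res_mul_le ⊥ x)).resolve_right fun h => hx (le_bot_iff.mp h))

lemma IsJoinPrincipal.res_mul_cancel (hL : IsLatticeDomain L) {q : L} (hq : IsJoinPrincipal q)
    (hq0 : q ≠ ⊥) (b : L) : res (b * q) q = b := by
  simpa [res_bot_left hL hq0] using (hq b ⊥).symm

lemma IsJoinPrincipal.le_of_mul_le_mul (hL : IsLatticeDomain L) {q b c : L}
    (hq : IsJoinPrincipal q) (hq0 : q ≠ ⊥) (h : c * q ≤ b * q) : c ≤ b :=
  hq.res_mul_cancel hL hq0 b ▸ le_res_iff.mpr h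

lemma res_res_res_le (hL : IsLatticeDomain L) {q x y : L} (hq : IsJoinPrincipal q)
    (hq0 : q ≠ ⊥) (hx : IsMeetPrincipal x) (hy : IsJoinPrincipal y) (hy0 : y ≠ ⊥)
    (hqxy : q ≤ res x y) : res q (res q (res x y)) ≤ res x y := by
  set u := res (q * y) x
  have hux : u * x = q * y := hx.res_mul_of_le (le_res_iff.mp hqxy)
  have hu : u ≤ res q (res x y) := by
    refine le_res_iff.mpr (hy.le_of_mul_le_mul hL hy0 ?_)
    calc u * res x y * y = u * (res x y * y) := mul_assoc _ _ _
      _ ≤ u * x := mul_le_mul_right (res_mul_le x y) u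
      _ = q * y := hux
  refine (res_anti_right hu).trans (le_res_iff.mpr (hq.le_of_mul_le_mul hL hq0 ?_))
  calc res q u * y * q = res q u * u * x := by rw [mul_assoc, mul_assoc, hux, mul_comm q]
    _ ≤ q * x := mul_le_mul_left (res_mul_le q u) x
    _ = x * q := mul_comm _ _

end

section

variable {L : Type*} [PGCLattice L]

lemma exists_isPrincipal_ne_bot_le {a : L} (ha : a ≠ ⊥) :
    ∃ x : L, IsPrincipal x ∧ x ≠ ⊥ ∧ x ≤ a := by
  by_contra! h
  refine ha (le_bot_iff.mp ?_)
  rw [PGCLattice.principally_generated a]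
  exact sSup_le fun x hx => le_bot_iff.mpr (by_contra fun hx0 => h x hx.1 hx0 hx.2)

lemma res_res_eq_sInf_res (hL : IsLatticeDomain L) {q a : L} (hq : IsPrincipal q)
    (hq0 : q ≠ ⊥) (hqa : q ≤ a) :
    res q (res q a) =
      sInf {b : L | ∃ x y : L, IsPrincipal x ∧ IsPrincipal y ∧ b = res x y ∧ a ≤ res x y} := by
  apply le_antisymm
  · refine le_sInf ?_
    rintro _ ⟨x, y, hx, hy, rfl, haxy⟩
    rcases eq_or_ne y ⊥ with rfl | hy0
    · exact (res_bot_right x).symm ▸ le_top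
    exact (res_anti_right (res_anti_right haxy)).trans
      (res_res_res_le hL hq.2 hq0 hx.1 hy.2 hy0 (hqa.trans haxy))
  · rw [PGCLattice.principally_generated (res q a), res_sSup_right]
    refine le_iInf₂ fun y hy => sInf_le ⟨q, y, hq, hy.1, rfl, ?_⟩
    exact le_res_iff.mpr (mul_comm a y ▸ le_res_iff.mp hy.2)

end

end MulLattice

theorem stmt9 {L : Type*} [PGCLattice L] (hL : IsLatticeDomain L)
    (a : L) (ha : a ≠ ⊥) :
    vclos a =
      sInf {b : L | ∃ x y : L, IsPrincipal x ∧ IsPrincipal y ∧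
        b = res x y ∧ a ≤ res x y} := by
  have hex := exists_isPrincipal_ne_bot_le ha
  obtain ⟨hq, hq0, hqa⟩ := hex.choose_spec
  rw [vclos, dif_pos hex]
  exact res_res_eq_sInf_res hL hq hq0 hqa
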